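/- Let G be a finite simple graph with injective edge ranking π and let e ∈ E. If M is a matching with the LFMM property in G and M' is a matching with the LFMM property in G − e, then M and M' agree on all edges of rank less than π(e): for every f ∈ E \ {e} with π(f) < π(e), f ∈ M if and only if f ∈ M'. That is, deleting an edge can only change the lexicographically first maximal matching on edges of larger rank. -/

import Mathlib

/-! An edge `f` lies in the LFMM exactly when no LFMM edge of smaller rank is adjacent to it, so
membership of `f` is decided by the LFMM edges of rank below `π f`. By induction on the rank,
two graphs with the same edges below rank `r` therefore have LFMMs agreeing below `r`; deleting
`e` changes no edge of rank below `π e`. -/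

variable {V : Type*}

/-- Two distinct edges are adjacent if they share an endpoint. -/
def EdgeAdj (e f : Sym2 V) : Prop := e ≠ f ∧ ∃ v, v ∈ e ∧ v ∈ f

/-- `M` is a matching in `G`: a set of pairwise non-adjacent edges of `G`. -/
def IsMatchingIn (G : SimpleGraph V) (M : Set (Sym2 V)) : Prop :=
  M ⊆ G.edgeSet ∧ ∀ e ∈ M, ∀ f ∈ M, ¬ EdgeAdj e f

/-- The edge `f` is covered by `M` (w.r.t. the ranking `π`): some edge of `M`
is adjacent to `f` and has strictly smaller rank. -/
def CoveredBy (π : Sym2 V → ℝ) (M : Set (Sym2 V)) (f : Sym2 V) : Prop :=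
  ∃ e ∈ M, EdgeAdj e f ∧ π e < π f

/-- `M` has the LFMM property in `G`: it is a matching and every edge of `G`
is either in `M` or covered by `M`. -/
def HasLFMM (G : SimpleGraph V) (π : Sym2 V → ℝ) (M : Set (Sym2 V)) : Prop :=
  IsMatchingIn G M ∧ ∀ f ∈ G.edgeSet, f ∈ M ∨ CoveredBy π M f

theorem HasLFMM.mem_of_lower_subset {G H : SimpleGraph V} {π : Sym2 V → ℝ} {M M' : Set (Sym2 V)}
    (hM : IsMatchingIn G M) (hM' : HasLFMM H π M') {f : Sym2 V} (hfH : f ∈ H.edgeSet)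
    (hfM : f ∈ M) (hlower : ∀ g ∈ M', π g < π f → g ∈ M) : f ∈ M' := by
  obtain hfM' | ⟨g, hgM', hgf, hlt⟩ := hM'.2 f hfH
  · exact hfM'
  · exact (hM.2 g (hlower g hgM' hlt) f hfM hgf).elim

theorem HasLFMM.mem_iff_of_edgeSet_agree_below [Finite V] {G H : SimpleGraph V}
    {π : Sym2 V → ℝ} {M M' : Set (Sym2 V)} (hM : HasLFMM G π M) (hM' : HasLFMM H π M')
    {r : ℝ} (hGH : ∀ f, π f < r → (f ∈ G.edgeSet ↔ f ∈ H.edgeSet)) :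
    ∀ f, π f < r → (f ∈ M ↔ f ∈ M') := by
  intro f
  induction f using (Finite.wellFounded_of_trans_of_irrefl (InvImage (· < ·) π)).induction with
  | _ f ih =>
    intro hfr
    have hbelow : ∀ g, π g < π f → (g ∈ M ↔ g ∈ M') := fun g hgf => ih g hgf (hgf.trans hfr)
    constructor
    · intro hfM
      exact hM'.mem_of_lower_subset hM.1 ((hGH f hfr).1 (hM.1.1 hfM)) hfM
        fun g hgM' hgf => (hbelow g hgf).2 hgM'
    · intro hfM'
      exact hM.mem_of_lower_subset hM'.1 ((hGH f hfr).2 (hM'.1.1 hfM')) hfM'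
        fun g hgM hgf => (hbelow g hgf).1 hgM

theorem lfmm_delete_agree_below_general [Finite V] (G : SimpleGraph V) (π : Sym2 V → ℝ)
    (M M' : Set (Sym2 V))
    (e : Sym2 V)
    (hM : HasLFMM G π M) (hM' : HasLFMM (G.deleteEdges {e}) π M') :
    ∀ f ∈ G.edgeSet, f ≠ e → π f < π e → (f ∈ M ↔ f ∈ M') := by
  have hagree : ∀ f, π f < π e → (f ∈ G.edgeSet ↔ f ∈ (G.deleteEdges {e}).edgeSet) := by
    intro f hfe
    have hne : f ≠ e := fun h => (h ▸ hfe).false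
    simp [SimpleGraph.edgeSet_deleteEdges, hne]
  exact fun f _ _ hfe => hM.mem_iff_of_edgeSet_agree_below hM' hagree f hfe

/-- Deleting an edge can only change the LFMM on edges of larger rank. -/
theorem lfmm_delete_agree_below [Finite V] (G : SimpleGraph V) (π : Sym2 V → ℝ)
    (hπ : Set.InjOn π G.edgeSet) (M M' : Set (Sym2 V))
    (e : Sym2 V) (heE : e ∈ G.edgeSet)
    (hM : HasLFMM G π M) (hM' : HasLFMM (G.deleteEdges {e}) π M') :
    ∀ f ∈ G.edgeSet, f ≠ e → π f < π e → (f ∈ M ↔ f ∈ M') :=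
  lfmm_delete_agree_below_general G π M M' e hM hM'
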